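/- Let A = [A_{ij}] (1 ≤ i,j ≤ 2) be a 2×2 block matrix with n×n blocks and 1 ≤ p ≤ 2. Then ω_p(A)^p ≤ ω_p(A_{11})^p + ω_p(A_{22})^p + 2 · (2^{-1/p} ω_p([[0, A_{12}],[A_{21}, 0]]))^p. -/

import Mathlib

open Matrix Complex

noncomputable def schattenNorm {m : Type*} [Fintype m] [DecidableEq m] (p : ℝ)
    (A : Matrix m m ℂ) : ℝ :=
  (∑ i, Real.sqrt ((Matrix.isHermitian_conjTranspose_mul_self A).eigenvalues i) ^ p) ^ (1 / p)

noncomputable def reM {m : Type*} [Fintype m] (X : Matrix m m ℂ) : Matrix m m ℂ :=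
  (2⁻¹ : ℂ) • (X + Xᴴ)

noncomputable def imM {m : Type*} [Fintype m] (X : Matrix m m ℂ) : Matrix m m ℂ :=
  (2 * Complex.I)⁻¹ • (X - Xᴴ)

noncomputable def wp {m : Type*} [Fintype m] [DecidableEq m] (p : ℝ)
    (A : Matrix m m ℂ) : ℝ :=
  ⨆ θ : ℝ, schattenNorm p (reM (Complex.exp (θ * Complex.I) • A))

/-!
Put `f t = t ^ (p / 2)`, concave on `[0, ∞)` since `p ≤ 2`, so that `‖M‖_p ^ p = tr f (M* M)`.
For a positive semidefinite block matrix `[[X, Z], [W, Y]]` one has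
`tr f [[X, Z], [W, Y]] ≤ tr f X + tr f Y`: averaging the matrix with its conjugate by
`diag (1, -1)` kills the off-diagonal blocks, and `tr f` is midpoint concave (in an eigenbasis of
the average, Jensen's inequality on the diagonal entries reduces this to scalar concavity).
For `X = B* B`, `Y = C* C` and `R = [[B, 0], [C, 0]]`, `R* R = diag (X + Y, 0)` has the spectrum
of `R R*`, whose diagonal blocks `B B*`, `C C*` have the spectra of `X`, `Y`; so pinching `R R*`
gives the subadditivity `tr f (X + Y) ≤ tr f X + tr f Y`. Applied to `M* M` for `M = [[B, C], [D, E]]` these yield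
`‖M‖_p ^ p ≤ ‖B‖_p ^ p + ‖E‖_p ^ p + ‖[[0, C], [D, 0]]‖_p ^ p`. Now `Re (e^{iθ} A)` has
diagonal blocks `Re (e^{iθ} A₁₁)`, `Re (e^{iθ} A₂₂)` and off-diagonal part
`Re (e^{iθ} [[0, A₁₂], [A₂₁, 0]])`; take the supremum over `θ`, noting
`2 · (2^{-1/p} x) ^ p = x ^ p`.
-/

open ComplexOrder

namespace Matrix

section TraceFun

variable {m k l : Type*} [Fintype m] [DecidableEq m] [Fintype k] [DecidableEq k]
  [Fintype l] [DecidableEq l]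

/-- `tr f(A)` for Hermitian `A`. Going through the characteristic polynomial makes it a function of
`A` alone and invariant under `A * B ↦ B * A`. -/
noncomputable def traceFun (f : ℝ → ℝ) (A : Matrix m m ℂ) : ℝ :=
  (A.charpoly.roots.map fun z => f z.re).sum

variable (f : ℝ → ℝ)

lemma IsHermitian.traceFun_eq {A : Matrix m m ℂ} (hA : A.IsHermitian) :
    traceFun f A = ∑ i, f (hA.eigenvalues i) := by
  rw [traceFun, hA.roots_charpoly_eq_eigenvalues, Multiset.map_map]
  rfl

lemma traceFun_mul_comm (A B : Matrix m m ℂ) : traceFun f (A * B) = traceFun f (B * A) := by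
  rw [traceFun, traceFun, charpoly_mul_comm]

lemma traceFun_fromBlocks_zero (A : Matrix k k ℂ) (B : Matrix l l ℂ) :
    traceFun f (fromBlocks A 0 0 B) = traceFun f A + traceFun f B := by
  rw [traceFun, charpoly_fromBlocks_zero₁₂, Polynomial.roots_mul
    (A.charpoly_monic.mul B.charpoly_monic).ne_zero, Multiset.map_add, Multiset.sum_add,
    traceFun, traceFun]

lemma traceFun_zero : traceFun f (0 : Matrix m m ℂ) = Fintype.card m * f 0 := by
  simp [traceFun, charpoly_zero, Multiset.map_nsmul, Multiset.sum_nsmul]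

end TraceFun

section Unitary

variable {m : Type*} [Fintype m] [DecidableEq m]

lemma sum_normSq_row_of_mem_unitaryGroup {W : Matrix m m ℂ} (hW : W ∈ unitaryGroup m ℂ) (i : m) :
    ∑ j, Complex.normSq (W i j) = 1 := by
  have h := congr_fun (congr_fun (mem_unitaryGroup_iff.mp hW) i) i
  simp only [mul_apply, star_apply, one_apply_eq, RCLike.star_def, Complex.mul_conj] at h
  exact_mod_cast h

lemma sum_normSq_col_of_mem_unitaryGroup {W : Matrix m m ℂ} (hW : W ∈ unitaryGroup m ℂ) (j : m) :
    ∑ i, Complex.normSq (W i j) = 1 := by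
  simpa using sum_normSq_row_of_mem_unitaryGroup (Unitary.star_mem hW) j

lemma re_mul_diagonal_mul_star_apply_self (W : Matrix m m ℂ) (d : m → ℝ) (i : m) :
    ((W * diagonal (fun j => (d j : ℂ)) * star W) i i).re = ∑ j, Complex.normSq (W i j) * d j := by
  rw [mul_apply, Complex.re_sum]
  refine Finset.sum_congr rfl fun j _ => ?_
  rw [mul_diagonal, star_apply, RCLike.star_def, mul_right_comm, Complex.mul_conj,
    ← Complex.ofReal_mul, Complex.ofReal_re]

variable {f : ℝ → ℝ}

lemma _root_.ConcaveOn.sum_le_sum_unitary_conj_diagonal (hf : ConcaveOn ℝ (Set.Ici 0) f)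
    {W : Matrix m m ℂ} (hW : W ∈ unitaryGroup m ℂ) {d : m → ℝ} (hd : ∀ j, 0 ≤ d j) :
    ∑ j, f (d j) ≤ ∑ i, f ((W * diagonal (fun j => (d j : ℂ)) * star W) i i).re := by
  calc ∑ j, f (d j) = ∑ i, ∑ j, Complex.normSq (W i j) * f (d j) := by
        rw [Finset.sum_comm]
        simp_rw [← Finset.sum_mul, sum_normSq_col_of_mem_unitaryGroup hW, one_mul]
    _ ≤ ∑ i, f (∑ j, Complex.normSq (W i j) * d j) := Finset.sum_le_sum fun i _ =>
        hf.le_map_sum (fun j _ => Complex.normSq_nonneg _)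
          (sum_normSq_row_of_mem_unitaryGroup hW i) (fun j _ => hd j)
    _ = _ := by simp_rw [re_mul_diagonal_mul_star_apply_self]

lemma _root_.ConcaveOn.sum_eigenvalues_le_sum_diag (hf : ConcaveOn ℝ (Set.Ici 0) f)
    {A : Matrix m m ℂ} (hA : A.PosSemidef) {V : Matrix m m ℂ} (hV : V ∈ unitaryGroup m ℂ) :
    ∑ i, f (hA.1.eigenvalues i) ≤ ∑ i, f ((star V * A * V) i i).re := by
  set U : Matrix m m ℂ := (hA.1.eigenvectorUnitary : Matrix m m ℂ)
  have hconj : star V * A * V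
      = (star V * U) * diagonal (fun j => (hA.1.eigenvalues j : ℂ)) * star (star V * U) := by
    conv_lhs => rw [hA.1.spectral_theorem, Unitary.conjStarAlgAut_apply]
    simp only [star_mul, star_star, Matrix.mul_assoc]
    rfl
  rw [hconj]
  exact hf.sum_le_sum_unitary_conj_diagonal
    (mul_mem (Unitary.star_mem hV) hA.1.eigenvectorUnitary.2) hA.eigenvalues_nonneg

end Unitary

section Concave

variable {m k l : Type*} [Fintype m] [DecidableEq m] [Fintype k] [DecidableEq k]
  [Fintype l] [DecidableEq l] {f : ℝ → ℝ}

lemma _root_.ConcaveOn.traceFun_add_le_two_mul (hf : ConcaveOn ℝ (Set.Ici 0) f)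
    {P Q G : Matrix m m ℂ} (hP : P.PosSemidef) (hQ : Q.PosSemidef) (hsum : P + Q = (2 : ℂ) • G) :
    traceFun f P + traceFun f Q ≤ 2 * traceFun f G := by
  have hG : G.IsHermitian := by
    have : Invertible (2 : ℂ) := invertibleOfNonzero two_ne_zero
    exact IsHermitian.of_smul (hsum ▸ (hP.add hQ).1) (IsSelfAdjoint.ofNat 2)
  set V : Matrix m m ℂ := (hG.eigenvectorUnitary : Matrix m m ℂ)
  have hV : V ∈ unitaryGroup m ℂ := hG.eigenvectorUnitary.2
  set d : Matrix m m ℂ → m → ℝ := fun M i => ((star V * M * V) i i).re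
  have hdG : ∀ i, d G i = hG.eigenvalues i := fun i => by
    have hdiag := hG.conjStarAlgAut_star_eigenvectorUnitary
    rw [Unitary.conjStarAlgAut_star_apply] at hdiag
    simp [d, V, hdiag]
  have hd_add : ∀ i, d P i + d Q i = 2 * hG.eigenvalues i := fun i => by
    have := congr_arg (fun M => ((star V * M * V) i i).re) hsum
    simp only [Matrix.mul_add, Matrix.add_mul, Matrix.mul_smul, Matrix.smul_mul, add_apply,
      smul_apply, smul_eq_mul, Complex.add_re] at this
    rw [← hdG]
    simpa [d] using this
  have hd_nonneg : ∀ {M : Matrix m m ℂ}, M.PosSemidef → ∀ i, 0 ≤ d M i := fun hM i =>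
    Complex.nonneg_iff.mp (hM.conjTranspose_mul_mul_same V).diag_nonneg |>.1
  rw [hP.1.traceFun_eq, hQ.1.traceFun_eq, hG.traceFun_eq, Finset.mul_sum]
  calc ∑ i, f (hP.1.eigenvalues i) + ∑ i, f (hQ.1.eigenvalues i)
      ≤ ∑ i, f (d P i) + ∑ i, f (d Q i) :=
        add_le_add (hf.sum_eigenvalues_le_sum_diag hP hV) (hf.sum_eigenvalues_le_sum_diag hQ hV)
    _ ≤ ∑ i, 2 * f (hG.eigenvalues i) := by
      rw [← Finset.sum_add_distrib]
      refine Finset.sum_le_sum fun i _ => ?_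
      have := hf.2 (hd_nonneg hP i) (hd_nonneg hQ i) (by norm_num : (0 : ℝ) ≤ 1 / 2)
        (by norm_num : (0 : ℝ) ≤ 1 / 2) (by norm_num)
      have hmid : (1 / 2 : ℝ) • d P i + (1 / 2 : ℝ) • d Q i = hG.eigenvalues i := by
        simp only [smul_eq_mul]
        linarith [hd_add i]
      rw [hmid, smul_eq_mul, smul_eq_mul] at this
      linarith

lemma _root_.ConcaveOn.traceFun_fromBlocks_le (hf : ConcaveOn ℝ (Set.Ici 0) f)
    {X : Matrix k k ℂ} {Y : Matrix l l ℂ} {Z : Matrix k l ℂ} {W : Matrix l k ℂ}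
    (hM : (fromBlocks X Z W Y).PosSemidef) :
    traceFun f (fromBlocks X Z W Y) ≤ traceFun f X + traceFun f Y := by
  set S : Matrix (k ⊕ l) (k ⊕ l) ℂ := fromBlocks 1 0 0 (-1)
  have hS : Sᴴ = S := by simp [S, fromBlocks_conjTranspose]
  have hSS : S * S = 1 := by simp [S, fromBlocks_multiply]
  have hflip : S * fromBlocks X Z W Y * Sᴴ = fromBlocks X (-Z) (-W) Y := by
    simp [hS, S, fromBlocks_multiply]
  have hsum : fromBlocks X Z W Y + S * fromBlocks X Z W Y * Sᴴ = (2 : ℂ) • fromBlocks X 0 0 Y := by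
    rw [hflip, fromBlocks_add, fromBlocks_smul]
    simp [two_smul]
  have hinv : traceFun f (S * fromBlocks X Z W Y * Sᴴ) = traceFun f (fromBlocks X Z W Y) := by
    rw [Matrix.mul_assoc, traceFun_mul_comm, Matrix.mul_assoc, hS, hSS, Matrix.mul_one]
  have := hf.traceFun_add_le_two_mul hM (hM.mul_mul_conjTranspose_same S) hsum
  rw [hinv, traceFun_fromBlocks_zero] at this
  linarith

open scoped MatrixOrder in
lemma _root_.ConcaveOn.traceFun_add_le (hf : ConcaveOn ℝ (Set.Ici 0) f) (hf0 : 0 ≤ f 0)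
    {X Y : Matrix m m ℂ} (hX : X.PosSemidef) (hY : Y.PosSemidef) :
    traceFun f (X + Y) ≤ traceFun f X + traceFun f Y := by
  obtain ⟨B, rfl⟩ := CStarAlgebra.nonneg_iff_eq_star_mul_self.mp hX.nonneg
  obtain ⟨C, rfl⟩ := CStarAlgebra.nonneg_iff_eq_star_mul_self.mp hY.nonneg
  set R : Matrix (m ⊕ m) (m ⊕ m) ℂ := fromBlocks B 0 C 0
  have hRR : star R * R = fromBlocks (star B * B + star C * C) 0 0 0 := by
    simp [R, star_eq_conjTranspose, fromBlocks_conjTranspose, fromBlocks_multiply]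
  have hRR' : R * star R = fromBlocks (B * star B) (B * star C) (C * star B) (C * star C) := by
    simp [R, star_eq_conjTranspose, fromBlocks_conjTranspose, fromBlocks_multiply]
  have hpinch := hf.traceFun_fromBlocks_le (hRR' ▸ posSemidef_self_mul_conjTranspose R)
  rw [← hRR', ← traceFun_mul_comm, hRR, traceFun_fromBlocks_zero, traceFun_zero,
    traceFun_mul_comm, traceFun_mul_comm f C] at hpinch
  have : 0 ≤ (Fintype.card m : ℝ) * f 0 := by positivity
  linarith

end Concave

end Matrix

section Schatten

variable {m k l : Type*} [Fintype m] [DecidableEq m] [Fintype k] [DecidableEq k]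
  [Fintype l] [DecidableEq l] {p : ℝ}

lemma schattenNorm_nonneg (p : ℝ) (A : Matrix m m ℂ) : 0 ≤ schattenNorm p A := by
  unfold schattenNorm
  positivity

lemma schattenNorm_rpow (hp : p ≠ 0) (A : Matrix m m ℂ) :
    schattenNorm p A ^ p = traceFun (· ^ (p / 2)) (Aᴴ * A) := by
  have hev := (posSemidef_conjTranspose_mul_self A).eigenvalues_nonneg
  have hterm : ∀ i, √((isHermitian_conjTranspose_mul_self A).eigenvalues i) ^ p
      = (isHermitian_conjTranspose_mul_self A).eigenvalues i ^ (p / 2) := fun i => by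
    rw [Real.sqrt_eq_rpow, ← Real.rpow_mul (hev i), one_div_mul_eq_div]
  rw [schattenNorm, ← Real.rpow_mul (by positivity), one_div_mul_cancel hp, Real.rpow_one,
    (isHermitian_conjTranspose_mul_self A).traceFun_eq]
  exact Finset.sum_congr rfl fun i _ => hterm i

theorem schattenNorm_fromBlocks_rpow_le (hp0 : 0 < p) (hp2 : p ≤ 2) (B : Matrix k k ℂ)
    (C : Matrix k l ℂ) (D : Matrix l k ℂ) (E : Matrix l l ℂ) :
    schattenNorm p (fromBlocks B C D E) ^ p
      ≤ schattenNorm p B ^ p + schattenNorm p E ^ p + schattenNorm p (fromBlocks 0 C D 0) ^ p := by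
  set f : ℝ → ℝ := (· ^ (p / 2))
  have hf : ConcaveOn ℝ (Set.Ici 0) f := Real.concaveOn_rpow (by positivity) (by linarith)
  have hf0 : 0 ≤ f 0 := by simp [f, Real.zero_rpow (by positivity : p / 2 ≠ 0)]
  have hM : (fromBlocks B C D E)ᴴ * fromBlocks B C D E
      = fromBlocks (Bᴴ * B + Dᴴ * D) (Bᴴ * C + Dᴴ * E) (Cᴴ * B + Eᴴ * D) (Cᴴ * C + Eᴴ * E) := by
    rw [fromBlocks_conjTranspose, fromBlocks_multiply]
  have hF : (fromBlocks 0 C D 0)ᴴ * fromBlocks 0 C D 0 = fromBlocks (Dᴴ * D) 0 0 (Cᴴ * C) := by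
    simp [fromBlocks_conjTranspose, fromBlocks_multiply]
  have hpinch := hf.traceFun_fromBlocks_le (hM ▸ posSemidef_conjTranspose_mul_self _)
  have hleft := hf.traceFun_add_le hf0 (posSemidef_conjTranspose_mul_self B)
    (posSemidef_conjTranspose_mul_self D)
  have hright := hf.traceFun_add_le hf0 (posSemidef_conjTranspose_mul_self C)
    (posSemidef_conjTranspose_mul_self E)
  rw [schattenNorm_rpow hp0.ne', schattenNorm_rpow hp0.ne', schattenNorm_rpow hp0.ne',
    schattenNorm_rpow hp0.ne', hM, hF, traceFun_fromBlocks_zero]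
  linarith

end Schatten

section NumericalRadius

variable {m k l : Type*} [Fintype m] [Fintype k] [Fintype l] {p : ℝ}

lemma reM_zero : reM (0 : Matrix m m ℂ) = 0 := by
  simp [reM]

lemma reM_fromBlocks (A : Matrix k k ℂ) (B : Matrix k l ℂ) (C : Matrix l k ℂ) (D : Matrix l l ℂ) :
    reM (fromBlocks A B C D)
      = fromBlocks (reM A) ((2⁻¹ : ℂ) • (B + Cᴴ)) ((2⁻¹ : ℂ) • (C + Bᴴ)) (reM D) := by
  simp [reM, fromBlocks_conjTranspose, fromBlocks_add, fromBlocks_smul]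

section Frobenius

attribute [local instance] Matrix.frobeniusNormedAddCommGroup Matrix.frobeniusNormedSpace

lemma norm_reM_smul_le {z : ℂ} (hz : ‖z‖ = 1) (A : Matrix m m ℂ) : ‖reM (z • A)‖ ≤ ‖A‖ := by
  calc ‖reM (z • A)‖ ≤ ‖(2⁻¹ : ℂ)‖ * (‖z • A‖ + ‖(z • A)ᴴ‖) :=
        (norm_smul_le _ _).trans (mul_le_mul_of_nonneg_left (norm_add_le _ _) (norm_nonneg _))
    _ = ‖A‖ := by
        rw [frobenius_norm_conjTranspose, norm_smul, hz, norm_inv, Complex.norm_two]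
        ring

variable [DecidableEq m]

lemma sum_eigenvalues_conjTranspose_mul_self (M : Matrix m m ℂ) :
    ∑ i, (isHermitian_conjTranspose_mul_self M).eigenvalues i = ‖M‖ ^ 2 := by
  have htrace : (Mᴴ * M).trace = ((‖M‖ ^ 2 : ℝ) : ℂ) := by
    rw [frobenius_norm_def, ← Real.sqrt_eq_rpow, Real.sq_sqrt (by positivity), Finset.sum_comm]
    push_cast
    refine Finset.sum_congr rfl fun j _ => Finset.sum_congr rfl fun i _ => ?_
    simp [Complex.conj_mul']
  have h := (isHermitian_conjTranspose_mul_self M).trace_eq_sum_eigenvalues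
  rw [htrace] at h
  exact RCLike.ofReal_injective (K := ℂ) (by push_cast at h ⊢; exact h.symm)

lemma schattenNorm_le_frobenius (hp : 0 < p) (M : Matrix m m ℂ) :
    schattenNorm p M ≤ (Fintype.card m * ‖M‖ ^ p) ^ (1 / p) := by
  have hev := (posSemidef_conjTranspose_mul_self M).eigenvalues_nonneg
  have hterm (i : m) : √((isHermitian_conjTranspose_mul_self M).eigenvalues i) ^ p ≤ ‖M‖ ^ p := by
    refine Real.rpow_le_rpow (Real.sqrt_nonneg _) ?_ hp.le
    rw [← Real.sqrt_sq (norm_nonneg M), ← sum_eigenvalues_conjTranspose_mul_self]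
    exact Real.sqrt_le_sqrt (Finset.single_le_sum (fun j _ => hev j) (Finset.mem_univ i))
  refine Real.rpow_le_rpow (by positivity) ?_ (by positivity)
  simpa using Finset.sum_le_sum fun i (_ : i ∈ Finset.univ) => hterm i

lemma bddAbove_range_schattenNorm_reM (hp : 0 < p) (A : Matrix m m ℂ) :
    BddAbove (Set.range fun θ : ℝ => schattenNorm p (reM (exp (θ * I) • A))) := by
  refine ⟨(Fintype.card m * ‖A‖ ^ p) ^ (1 / p), ?_⟩
  rintro _ ⟨θ, rfl⟩
  refine (schattenNorm_le_frobenius hp _).trans ?_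
  gcongr
  exact norm_reM_smul_le (by simp) A

end Frobenius

variable [DecidableEq m]

lemma schattenNorm_le_wp (hp : 0 < p) (A : Matrix m m ℂ) (θ : ℝ) :
    schattenNorm p (reM (exp (θ * I) • A)) ≤ wp p A :=
  le_ciSup (bddAbove_range_schattenNorm_reM hp A) θ

lemma wp_nonneg (hp : 0 < p) (A : Matrix m m ℂ) : 0 ≤ wp p A :=
  (schattenNorm_nonneg p _).trans (schattenNorm_le_wp hp A 0)

lemma wp_rpow_le (hp : 0 < p) {A : Matrix m m ℂ} {S : ℝ}
    (h : ∀ θ : ℝ, schattenNorm p (reM (exp (θ * I) • A)) ^ p ≤ S) : wp p A ^ p ≤ S := by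
  have hS : 0 ≤ S := (Real.rpow_nonneg (schattenNorm_nonneg p _) p).trans (h 0)
  have hsup : wp p A ≤ S ^ p⁻¹ := ciSup_le fun θ =>
    (Real.le_rpow_inv_iff_of_pos (schattenNorm_nonneg p _) hS hp).mpr (h θ)
  calc wp p A ^ p ≤ (S ^ p⁻¹) ^ p := Real.rpow_le_rpow (wp_nonneg hp A) hsup hp.le
    _ = S := Real.rpow_inv_rpow hS hp.ne'

end NumericalRadius

theorem stmt_8 {n : ℕ} (p : ℝ) (hp1 : 1 ≤ p) (hp2 : p ≤ 2)
    (A11 A12 A21 A22 : Matrix (Fin n) (Fin n) ℂ) :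
    wp p (Matrix.fromBlocks A11 A12 A21 A22) ^ p ≤
      wp p A11 ^ p + wp p A22 ^ p +
        2 * ((2 : ℝ) ^ (-(1 / p)) * wp p (Matrix.fromBlocks 0 A12 A21 0)) ^ p := by
  have hp : 0 < p := by linarith
  set F := fromBlocks 0 A12 A21 0
  have hscale : 2 * ((2 : ℝ) ^ (-(1 / p)) * wp p F) ^ p = wp p F ^ p := by
    rw [Real.mul_rpow (by positivity) (wp_nonneg hp F), ← Real.rpow_mul zero_le_two,
      neg_mul, one_div_mul_cancel hp.ne', Real.rpow_neg_one]
    ring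
  rw [hscale]
  refine wp_rpow_le hp fun θ => ?_
  calc schattenNorm p (reM (exp (θ * I) • fromBlocks A11 A12 A21 A22)) ^ p
      ≤ schattenNorm p (reM (exp (θ * I) • A11)) ^ p
          + schattenNorm p (reM (exp (θ * I) • A22)) ^ p
          + schattenNorm p (reM (exp (θ * I) • F)) ^ p := by
        rw [fromBlocks_smul, fromBlocks_smul, reM_fromBlocks, reM_fromBlocks, smul_zero, reM_zero]
        exact schattenNorm_fromBlocks_rpow_le hp hp2 _ _ _ _
    _ ≤ wp p A11 ^ p + wp p A22 ^ p + wp p F ^ p := by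
      gcongr <;> first | exact schattenNorm_nonneg p _ | exact schattenNorm_le_wp hp _ θ
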